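/- arXiv:1503.01801 — 2 statements merged into one kernel-verified Lean document; each statement's English description precedes it below -/
import Mathlib

section
/- Let G = (ℝⁿ,·) be a Lie group whose underlying manifold is ℝⁿ and let Ȟ be the measure with density y ↦ |det D(ρ_y)(e)|⁻¹ with respect to Lebesgue measure. Let L have smooth coefficients with A(x) symmetric positive semidefinite, and assume the representation hypothesis holds with measures μ and ν. If u ∈ C²(ℝⁿ,ℝ) satisfies Lu ≥ 0 on ℝⁿ and u ∈ L¹(ℝⁿ, Ȟ), then ∫ (Lu)(x·y) dν(y) = 0 for every x ∈ ℝⁿ. -/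
open MeasureTheory

/-- Partial derivative `∂u/∂x_i` on `ℝⁿ = Fin n → ℝ`. -/
noncomputable def pderiv' (n : ℕ) (i : Fin n) (u : (Fin n → ℝ) → ℝ) (x : Fin n → ℝ) : ℝ :=
  fderiv ℝ u x (Pi.single i 1)

/-- The second order operator
`L u = Σ a_{ij} ∂²u/∂x_i∂x_j + Σ b_j ∂u/∂x_j`. -/
noncomputable def Lop (n : ℕ) (a : Fin n → Fin n → (Fin n → ℝ) → ℝ)
    (b : Fin n → (Fin n → ℝ) → ℝ) (u : (Fin n → ℝ) → ℝ) (x : Fin n → ℝ) : ℝ :=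
  (∑ i, ∑ j, a i j x * pderiv' n i (pderiv' n j u) x) + ∑ j, b j x * pderiv' n j u x

/-- The right-invariant measure `Ȟ`, with density `y ↦ |det D(ρ_y)(e)|⁻¹`
with respect to Lebesgue measure, where `ρ_y` is right translation by `y`. -/
noncomputable def Hcheck (n : ℕ) (mul : (Fin n → ℝ) → (Fin n → ℝ) → (Fin n → ℝ))
    (e : Fin n → ℝ) : Measure (Fin n → ℝ) :=
  volume.withDensity fun y =>
    ENNReal.ofReal |(fderiv ℝ (fun z => mul z y) e).det|⁻¹

section Aux

variable {n : ℕ} {mul : (Fin n → ℝ) → (Fin n → ℝ) → (Fin n → ℝ)}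
  {inv : (Fin n → ℝ) → (Fin n → ℝ)} {e : Fin n → ℝ}

lemma aux_contDiff_rho (hm : ContDiff ℝ (⊤ : ℕ∞) fun p : (Fin n → ℝ) × (Fin n → ℝ) => mul p.1 p.2)
    (y : Fin n → ℝ) : ContDiff ℝ (⊤ : ℕ∞) fun z => mul z y :=
  hm.comp (contDiff_id.prodMk contDiff_const)

lemma aux_det_ne_zero (hm : ContDiff ℝ (⊤ : ℕ∞) fun p : (Fin n → ℝ) × (Fin n → ℝ) => mul p.1 p.2)
    (hassoc : ∀ x y z, mul (mul x y) z = mul x (mul y z))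
    (hidr : ∀ x, mul x e = x) (hinvr : ∀ x, mul x (inv x) = e)
    (y x : Fin n → ℝ) : (fderiv ℝ (fun z => mul z y) x).det ≠ 0 := by
  have hcomp : (fun z => mul z (inv y)) ∘ (fun z => mul z y) = id := by
    funext w; simp [Function.comp, hassoc, hinvr, hidr]
  have h1 : fderiv ℝ ((fun z => mul z (inv y)) ∘ (fun z => mul z y)) x
      = (fderiv ℝ (fun z => mul z (inv y)) (mul x y)).comp (fderiv ℝ (fun z => mul z y) x) :=
    fderiv_comp x (((aux_contDiff_rho hm _).differentiable (by simp)) _)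
      (((aux_contDiff_rho hm _).differentiable (by simp)) _)
  rw [hcomp, fderiv_id] at h1
  have h2 : (fderiv ℝ (fun z => mul z (inv y)) (mul x y)).det
      * (fderiv ℝ (fun z => mul z y) x).det = 1 := by
    have := congrArg ContinuousLinearMap.det h1
    simpa [ContinuousLinearMap.det, LinearMap.det_comp] using this.symm
  exact right_ne_zero_of_mul_eq_one h2

lemma aux_det_chain (hm : ContDiff ℝ (⊤ : ℕ∞) fun p : (Fin n → ℝ) × (Fin n → ℝ) => mul p.1 p.2)
    (hassoc : ∀ x y z, mul (mul x y) z = mul x (mul y z))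
    (hidl : ∀ x, mul e x = x)
    (x z : Fin n → ℝ) :
    (fderiv ℝ (fun w => mul w (mul x z)) e).det
      = (fderiv ℝ (fun w => mul w z) x).det * (fderiv ℝ (fun w => mul w x) e).det := by
  have hcomp : (fun w => mul w (mul x z)) = (fun w => mul w z) ∘ (fun w => mul w x) := by
    funext w; simp [Function.comp, hassoc]
  rw [hcomp, fderiv_comp e (((aux_contDiff_rho hm _).differentiable (by simp)) _)
      (((aux_contDiff_rho hm _).differentiable (by simp)) _)]
  simp only [hidl]
  simp [ContinuousLinearMap.det, LinearMap.det_comp]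

lemma aux_density_meas (hm : ContDiff ℝ (⊤ : ℕ∞) fun p : (Fin n → ℝ) × (Fin n → ℝ) => mul p.1 p.2) :
    Measurable fun y : Fin n → ℝ =>
      ENNReal.ofReal |(fderiv ℝ (fun z => mul z y) e).det|⁻¹ := by
  have hrw : ∀ y : Fin n → ℝ, fderiv ℝ (fun z => mul z y) e
      = (fderiv ℝ (fun p : (Fin n → ℝ) × (Fin n → ℝ) => mul p.1 p.2) (e, y)).comp
          (ContinuousLinearMap.inl ℝ _ _) := by
    intro y
    have hM : HasFDerivAt (fun p : (Fin n → ℝ) × (Fin n → ℝ) => mul p.1 p.2)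
        (fderiv ℝ (fun p : (Fin n → ℝ) × (Fin n → ℝ) => mul p.1 p.2) (e, y)) (e, y) :=
      (hm.differentiable (by simp) (e, y)).hasFDerivAt
    exact (hM.comp e (hasFDerivAt_prodMk_left (𝕜 := ℝ) e y)).fderiv
  have hc : Continuous fun y : Fin n → ℝ => (fderiv ℝ (fun z => mul z y) e).det := by
    simp only [hrw]
    exact ContinuousLinearMap.continuous_det.comp
      (((hm.continuous_fderiv (by simp)).comp (continuous_const.prodMk continuous_id)).clm_comp
        continuous_const)
  exact (hc.measurable.abs.inv).ennreal_ofReal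

lemma aux_Hcheck_map (hm : ContDiff ℝ (⊤ : ℕ∞) fun p : (Fin n → ℝ) × (Fin n → ℝ) => mul p.1 p.2)
    (hassoc : ∀ x y z, mul (mul x y) z = mul x (mul y z))
    (hidl : ∀ x, mul e x = x) (hidr : ∀ x, mul x e = x)
    (hinvl : ∀ x, mul (inv x) x = e) (hinvr : ∀ x, mul x (inv x) = e)
    (z : Fin n → ℝ) :
    Measure.map (fun x => mul x z) (Hcheck n mul e) = Hcheck n mul e := by
  have hρ : ∀ y, ContDiff ℝ (⊤ : ℕ∞) fun w : Fin n → ℝ => mul w y := fun y =>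
    hm.comp (contDiff_id.prodMk contDiff_const)
  have hφm : Measurable fun x : Fin n → ℝ => mul x z := (hρ z).continuous.measurable
  have hsurj : Function.Surjective fun x : Fin n → ℝ => mul x z := fun w =>
    ⟨mul w (inv z), show mul (mul w (inv z)) z = w by rw [hassoc, hinvl, hidr]⟩
  have hinj : Function.Injective fun x : Fin n → ℝ => mul x z := by
    intro w w' h
    have := congrArg (fun t => mul t (inv z)) h
    simpa [hassoc, hinvr, hidr] using this
  ext s hs
  rw [Measure.map_apply hφm hs, Hcheck, withDensity_apply _ hs, withDensity_apply _ (hφm hs)]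
  have himg : (fun x : Fin n → ℝ => mul x z) '' ((fun x => mul x z) ⁻¹' s) = s :=
    Set.image_preimage_eq_of_subset
      (by rw [Set.range_eq_univ.mpr hsurj]; exact Set.subset_univ s)
  symm
  calc ∫⁻ y in s, ENNReal.ofReal |(fderiv ℝ (fun w => mul w y) e).det|⁻¹
      = ∫⁻ y in (fun x : Fin n → ℝ => mul x z) '' ((fun x => mul x z) ⁻¹' s),
          ENNReal.ofReal |(fderiv ℝ (fun w => mul w y) e).det|⁻¹ := by rw [himg]
    _ = ∫⁻ x in (fun x => mul x z) ⁻¹' s,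
          ENNReal.ofReal |(fderiv ℝ (fun w => mul w z) x).det|
            * ENNReal.ofReal |(fderiv ℝ (fun w => mul w (mul x z)) e).det|⁻¹ := by
        rw [lintegral_image_eq_lintegral_abs_det_fderiv_mul volume (hφm hs)
          (fun x _ => (((hρ z).differentiable (by simp) x).hasFDerivAt).hasFDerivWithinAt)
          (hinj.injOn) (fun y => ENNReal.ofReal |(fderiv ℝ (fun w => mul w y) e).det|⁻¹)]
    _ = ∫⁻ x in (fun x => mul x z) ⁻¹' s,
          ENNReal.ofReal |(fderiv ℝ (fun w => mul w x) e).det|⁻¹ := by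
        apply lintegral_congr fun x => ?_
        have hchain := aux_det_chain hm hassoc hidl x z
        have hAne : (fderiv ℝ (fun w => mul w z) x).det ≠ 0 :=
          aux_det_ne_zero hm hassoc hidr hinvr z x
        rw [hchain, abs_mul, mul_inv, ← ENNReal.ofReal_mul (abs_nonneg _), ← mul_assoc,
          mul_inv_cancel₀ (abs_ne_zero.mpr hAne), one_mul]

lemma aux_contDiff_pderiv' {u : (Fin n → ℝ) → ℝ} {m : ℕ∞} (hu : ContDiff ℝ (m + 1) u) (j : Fin n) :
    ContDiff ℝ m (pderiv' n j u) := by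
  have h1 : ContDiff ℝ m (fderiv ℝ u) := hu.fderiv_right le_rfl
  exact (ContinuousLinearMap.apply ℝ ℝ (Pi.single j 1 : Fin n → ℝ)).contDiff.comp h1

lemma aux_continuous_Lop {a : Fin n → Fin n → (Fin n → ℝ) → ℝ} {b : Fin n → (Fin n → ℝ) → ℝ}
    (ha : ∀ i j, ContDiff ℝ (⊤ : ℕ∞) (a i j)) (hb : ∀ j, ContDiff ℝ (⊤ : ℕ∞) (b j))
    {u : (Fin n → ℝ) → ℝ} (hu : ContDiff ℝ 2 u) :
    Continuous (Lop n a b u) := by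
  have hu' : ContDiff ℝ ((1 : ℕ∞) + 1) u := by
    convert hu using 2
    norm_num
  have h1 : ∀ j, ContDiff ℝ 1 (pderiv' n j u) := fun j => aux_contDiff_pderiv' hu' j
  have h2 : ∀ i j, Continuous (pderiv' n i (pderiv' n j u)) := by
    intro i j
    have : ContDiff ℝ ((0 : ℕ∞) + 1) (pderiv' n j u) := by
      convert h1 j using 2
      norm_num
    exact ((aux_contDiff_pderiv' this i).continuous)
  apply Continuous.add
  · exact continuous_finset_sum _ fun i _ => continuous_finset_sum _ fun j _ =>
      ((ha i j).continuous).mul (h2 i j)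
  · exact continuous_finset_sum _ fun j _ => ((hb j).continuous).mul ((h1 j).continuous)

lemma aux_continuous_int (hm : ContDiff ℝ (⊤ : ℕ∞) fun p : (Fin n → ℝ) × (Fin n → ℝ) => mul p.1 p.2)
    {g : (Fin n → ℝ) → ℝ} (hg : Continuous g)
    {K : Set (Fin n → ℝ)} (hK : IsCompact K)
    (ν : Measure (Fin n → ℝ)) [IsFiniteMeasure ν] (hνsupp : ν Kᶜ = 0) :
    Continuous fun x => ∫ y, g (mul x y) ∂ν := by
  have hmc : Continuous fun p : (Fin n → ℝ) × (Fin n → ℝ) => mul p.1 p.2 := hm.continuous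
  have haeK : ∀ᵐ y ∂ν, y ∈ K := by
    rw [ae_iff]
    exact hνsupp
  rw [continuous_iff_continuousAt]
  intro x₀
  have hK2 : IsCompact ((fun p : (Fin n → ℝ) × (Fin n → ℝ) => mul p.1 p.2) ''
      (Metric.closedBall x₀ 1 ×ˢ K)) :=
    ((isCompact_closedBall x₀ 1).prod hK).image hmc
  obtain ⟨C, hC⟩ := hK2.exists_bound_of_continuousOn hg.continuousOn
  apply continuousAt_of_dominated (bound := fun _ => C)
  · filter_upwards with x
    exact (hg.comp (hmc.comp (Continuous.prodMk_right x))).aestronglyMeasurable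
  · filter_upwards [Metric.closedBall_mem_nhds x₀ one_pos] with x hx
    filter_upwards [haeK] with y hy
    exact hC _ ⟨(x, y), ⟨hx, hy⟩, rfl⟩
  · exact integrable_const C
  · filter_upwards with y
    exact (hg.comp (hmc.comp (continuous_id.prodMk continuous_const))).continuousAt

end Aux

/-- If `u ∈ C²` is `L`-subharmonic and `u ∈ L¹(ℝⁿ, Ȟ)`, then `N(Lu) ≡ 0`. -/
theorem N_of_Lu_eq_zero
    {n : ℕ}
    -- the coefficients of L
    (a : Fin n → Fin n → (Fin n → ℝ) → ℝ) (b : Fin n → (Fin n → ℝ) → ℝ)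
    (ha : ∀ i j, ContDiff ℝ (⊤ : ℕ∞) (a i j)) (hb : ∀ j, ContDiff ℝ (⊤ : ℕ∞) (b j))
    (hsym : ∀ i j x, a i j x = a j i x)
    (hpsd : ∀ (x ξ : Fin n → ℝ), 0 ≤ ∑ i, ∑ j, a i j x * ξ i * ξ j)
    -- the Lie group structure G = (ℝⁿ, ·)
    (mul : (Fin n → ℝ) → (Fin n → ℝ) → (Fin n → ℝ))
    (inv : (Fin n → ℝ) → (Fin n → ℝ)) (e : Fin n → ℝ)
    (hassoc : ∀ x y z, mul (mul x y) z = mul x (mul y z))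
    (hidl : ∀ x, mul e x = x) (hidr : ∀ x, mul x e = x)
    (hinvl : ∀ x, mul (inv x) x = e) (hinvr : ∀ x, mul x (inv x) = e)
    (hmul_smooth : ContDiff ℝ (⊤ : ℕ∞) fun p : (Fin n → ℝ) × (Fin n → ℝ) => mul p.1 p.2)
    (hinv_smooth : ContDiff ℝ (⊤ : ℕ∞) inv)
    -- the representation hypothesis
    (Ω : Set (Fin n → ℝ)) (hΩo : IsOpen Ω) (hΩb : Bornology.IsBounded Ω)
    (μ ν : Measure (Fin n → ℝ))
    (hμ : IsProbabilityMeasure μ) (hν : IsFiniteMeasure ν)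
    (hμsupp : μ (frontier Ω)ᶜ = 0) (hνsupp : ν (closure Ω)ᶜ = 0)
    (hrep : ∀ v : (Fin n → ℝ) → ℝ, ContDiff ℝ 2 v → ∀ x,
      v x = (∫ y, v (mul x y) ∂μ) - ∫ y, Lop n a b v (mul x y) ∂ν)
    -- the function u
    (u : (Fin n → ℝ) → ℝ) (hu : ContDiff ℝ 2 u)
    (hsub : ∀ x, 0 ≤ Lop n a b u x)
    (hu1 : Integrable u (Hcheck n mul e)) :
    ∀ x, (∫ y, Lop n a b u (mul x y) ∂ν) = 0 := by
  classical
  haveI : SigmaFinite (Hcheck n mul e) := by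
    rw [Hcheck]; infer_instance
  have hmap : ∀ z, Measure.map (fun x => mul x z) (Hcheck n mul e) = Hcheck n mul e :=
    aux_Hcheck_map hmul_smooth hassoc hidl hidr hinvl hinvr
  have hLu_cont : Continuous (Lop n a b u) := aux_continuous_Lop ha hb hu
  have huc : Continuous u := hu.continuous
  have hmc : Continuous fun p : (Fin n → ℝ) × (Fin n → ℝ) => mul p.1 p.2 :=
    hmul_smooth.continuous
  set N : (Fin n → ℝ) → ℝ := fun x => ∫ y, Lop n a b u (mul x y) ∂ν with hNdef
  set T : (Fin n → ℝ) → ℝ := fun x => ∫ y, u (mul x y) ∂μ with hTdef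
  have hNeq : ∀ x, N x = T x - u x := by
    intro x
    have := hrep u hu x
    simp only [hNdef, hTdef]
    linarith
  have hK : IsCompact (closure Ω) := hΩb.isCompact_closure
  have hNcont : Continuous N := aux_continuous_int hmul_smooth hLu_cont hK ν hνsupp
  -- Fubini setup
  have hFc : Continuous fun p : (Fin n → ℝ) × (Fin n → ℝ) => u (mul p.1 p.2) :=
    huc.comp hmc
  have hρm : ∀ y, Measurable fun x : Fin n → ℝ => mul x y := fun y =>
    (hmc.comp (continuous_id.prodMk continuous_const)).measurable
  have hcomp_int : ∀ y, Integrable (fun x => u (mul x y)) (Hcheck n mul e) := by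
    intro y
    have h1 : Integrable u (Measure.map (fun x => mul x y) (Hcheck n mul e)) := by
      rw [hmap y]; exact hu1
    exact (integrable_map_measure huc.aestronglyMeasurable (hρm y).aemeasurable).mp h1
  have hnorm_int : ∀ y, ∫ x, ‖u (mul x y)‖ ∂(Hcheck n mul e) = ∫ x, ‖u x‖ ∂(Hcheck n mul e) := by
    intro y
    have h := integral_map (μ := Hcheck n mul e) (φ := fun x => mul x y)
      (hρm y).aemeasurable (f := fun w => ‖u w‖) ?_
    · rw [hmap y] at h
      exact h.symm
    · rw [hmap y]
      exact huc.norm.aestronglyMeasurable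
  have hint_eq : ∀ y, ∫ x, u (mul x y) ∂(Hcheck n mul e) = ∫ x, u x ∂(Hcheck n mul e) := by
    intro y
    have h := integral_map (μ := Hcheck n mul e) (φ := fun x => mul x y)
      (hρm y).aemeasurable (f := u) ?_
    · rw [hmap y] at h
      exact h.symm
    · rw [hmap y]
      exact huc.aestronglyMeasurable
  have hFint : Integrable (fun p : (Fin n → ℝ) × (Fin n → ℝ) => u (mul p.1 p.2))
      ((Hcheck n mul e).prod μ) := by
    rw [integrable_prod_iff' hFc.aestronglyMeasurable]
    constructor
    · filter_upwards with y
      exact hcomp_int y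
    · have : (fun y => ∫ x, ‖u (mul x y)‖ ∂(Hcheck n mul e))
          = fun _ => ∫ x, ‖u x‖ ∂(Hcheck n mul e) := funext hnorm_int
      rw [this]
      exact integrable_const _
  have hTint : Integrable T (Hcheck n mul e) := hFint.integral_prod_left
  have hTH : ∫ x, T x ∂(Hcheck n mul e) = ∫ x, u x ∂(Hcheck n mul e) := by
    have h1 : ∫ x, T x ∂(Hcheck n mul e)
        = ∫ p, u (mul p.1 p.2) ∂((Hcheck n mul e).prod μ) := (integral_prod _ hFint).symm
    rw [h1, integral_prod_symm _ hFint]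
    simp only [hint_eq]
    simp [integral_const]
  have hNint : Integrable N (Hcheck n mul e) := by
    have : N = fun x => T x - u x := funext hNeq
    rw [this]
    exact hTint.sub hu1
  have hNH : ∫ x, N x ∂(Hcheck n mul e) = 0 := by
    have : N = fun x => T x - u x := funext hNeq
    rw [this, integral_sub hTint hu1, hTH, sub_self]
  have hN0 : ∀ x, 0 ≤ N x := fun x => integral_nonneg fun y => hsub _
  have hae : N =ᵐ[Hcheck n mul e] 0 :=
    (integral_eq_zero_iff_of_nonneg hN0 hNint).mp hNH
  have haev : N =ᵐ[(volume : Measure (Fin n → ℝ))] 0 := by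
    rw [Hcheck] at hae
    have h2 := (ae_withDensity_iff (aux_density_meas hmul_smooth)).mp hae
    filter_upwards [h2] with x hx
    apply hx
    have hdet : (fderiv ℝ (fun z => mul z x) e).det ≠ 0 :=
      aux_det_ne_zero hmul_smooth hassoc hidr hinvr x e
    simp only [ne_eq, ENNReal.ofReal_eq_zero, not_le]
    positivity
  have hN0' : N = 0 := (Continuous.ae_eq_iff_eq volume hNcont continuous_const).mp haev
  intro x
  have := congrFun hN0' x
  simpa using this
end

section
/- Let G = (ℝⁿ,·) be a Lie group whose underlying manifold is ℝⁿ and let Ȟ be the measure with density y ↦ |det D(ρ_y)(e)|⁻¹ with respect to Lebesgue measure. Let L have smooth coefficients with A(x) symmetric positive semidefinite, and assume the representation hypothesis holds with measures μ and ν, together with positivity detection for ν. If u ∈ C²(ℝⁿ,ℝ) satisfies Lu ≥ 0 on ℝⁿ and u ∈ L¹(ℝⁿ, Ȟ), then Lu = 0 on all of ℝⁿ. -/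
open MeasureTheory

open ENNReal

lemma pderiv'_contDiff {n : ℕ} (j : Fin n) {u : (Fin n → ℝ) → ℝ} (hu : ContDiff ℝ 2 u) :
    ContDiff ℝ 1 (pderiv' n j u) := by
  have h1 : ContDiff ℝ 1 (fderiv ℝ u) := hu.fderiv_right (by norm_num)
  exact h1.clm_apply contDiff_const

lemma Lop_continuous {n : ℕ} {a : Fin n → Fin n → (Fin n → ℝ) → ℝ}
    {b : Fin n → (Fin n → ℝ) → ℝ}
    (ha : ∀ i j, Continuous (a i j)) (hb : ∀ j, Continuous (b j))
    {u : (Fin n → ℝ) → ℝ} (hu : ContDiff ℝ 2 u) :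
    Continuous (Lop n a b u) := by
  have h1 : ∀ j : Fin n, Continuous (pderiv' n j u) := fun j =>
    (pderiv'_contDiff j hu).continuous
  have h2 : ∀ i j : Fin n, Continuous (pderiv' n i (pderiv' n j u)) := by
    intro i j
    have := (pderiv'_contDiff j hu).continuous_fderiv one_ne_zero
    exact this.clm_apply continuous_const
  unfold Lop
  exact (continuous_finset_sum _ fun i _ => continuous_finset_sum _ fun j _ =>
    (ha i j).mul (h2 i j)).add (continuous_finset_sum _ fun j _ => (hb j).mul (h1 j))

open ENNReal

section Grp
variable {n : ℕ} {mul : (Fin n → ℝ) → (Fin n → ℝ) → (Fin n → ℝ)}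

lemma hT_smooth (hmul_smooth : ContDiff ℝ (⊤ : ℕ∞) fun p : (Fin n → ℝ) × (Fin n → ℝ) => mul p.1 p.2)
    (y : Fin n → ℝ) : ContDiff ℝ (⊤ : ℕ∞) (fun x => mul x y) :=
  hmul_smooth.comp (contDiff_id.prodMk contDiff_const)

lemma hT_diff (hmul_smooth : ContDiff ℝ (⊤ : ℕ∞) fun p : (Fin n → ℝ) × (Fin n → ℝ) => mul p.1 p.2)
    (y x : Fin n → ℝ) : DifferentiableAt ℝ (fun z => mul z y) x :=
  ((hT_smooth hmul_smooth y).differentiable (by simp)).differentiableAt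

lemma hdet_mul {e : Fin n → ℝ}
    (hassoc : ∀ x y z, mul (mul x y) z = mul x (mul y z)) (hidl : ∀ x, mul e x = x)
    (hmul_smooth : ContDiff ℝ (⊤ : ℕ∞) fun p : (Fin n → ℝ) × (Fin n → ℝ) => mul p.1 p.2)
    (x y : Fin n → ℝ) :
    (fderiv ℝ (fun z => mul z (mul x y)) e).det
      = (fderiv ℝ (fun z => mul z y) x).det * (fderiv ℝ (fun z => mul z x) e).det := by
  have hcomp : (fun z => mul z (mul x y)) = (fun z => mul z y) ∘ (fun z => mul z x) :=
    funext fun z => (hassoc z x y).symm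
  have hd1 : DifferentiableAt ℝ (fun z => mul z y) ((fun z => mul z x) e) := by
    exact hT_diff hmul_smooth y _
  rw [hcomp, fderiv_comp e hd1 (hT_diff hmul_smooth x e)]
  rw [show mul e x = x from hidl x]
  simp [ContinuousLinearMap.det, ContinuousLinearMap.coe_comp, LinearMap.det_comp]

lemma hdet_ne {inv : (Fin n → ℝ) → (Fin n → ℝ)} {e : Fin n → ℝ}
    (hassoc : ∀ x y z, mul (mul x y) z = mul x (mul y z)) (hidr : ∀ x, mul x e = x)
    (hinvr : ∀ x, mul x (inv x) = e)
    (hmul_smooth : ContDiff ℝ (⊤ : ℕ∞) fun p : (Fin n → ℝ) × (Fin n → ℝ) => mul p.1 p.2)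
    (y x : Fin n → ℝ) : (fderiv ℝ (fun z => mul z y) x).det ≠ 0 := by
  have hli : (fun z => mul z (inv y)) ∘ (fun z => mul z y) = id := by
    funext z
    simp only [Function.comp_apply, id_eq, hassoc, hinvr, hidr]
  have h := fderiv_comp x (hT_diff hmul_smooth (inv y) (mul x y)) (hT_diff hmul_smooth y x)
  have h2 : fderiv ℝ ((fun z => mul z (inv y)) ∘ (fun z => mul z y)) x
      = ContinuousLinearMap.id ℝ (Fin n → ℝ) := by rw [hli, fderiv_id]
  rw [h2] at h
  have hdet : (1 : ℝ) = (fderiv ℝ (fun z => mul z (inv y)) (mul x y)).det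
      * (fderiv ℝ (fun z => mul z y) x).det := by
    have := congrArg ContinuousLinearMap.det h
    simpa [ContinuousLinearMap.det, ContinuousLinearMap.coe_comp, LinearMap.det_comp] using this
  intro h0
  rw [h0, mul_zero] at hdet
  exact one_ne_zero hdet

end Grp

section Dens
variable {n : ℕ} {mul : (Fin n → ℝ) → (Fin n → ℝ) → (Fin n → ℝ)}

lemma fderiv_eq_comp_inl
    (hmul_smooth : ContDiff ℝ (⊤ : ℕ∞) fun p : (Fin n → ℝ) × (Fin n → ℝ) => mul p.1 p.2)
    (e y : Fin n → ℝ) :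
    fderiv ℝ (fun z => mul z y) e
      = (fderiv ℝ (fun p : (Fin n → ℝ) × (Fin n → ℝ) => mul p.1 p.2) (e, y)).comp
        (ContinuousLinearMap.inl ℝ (Fin n → ℝ) (Fin n → ℝ)) := by
  have hF : HasFDerivAt (fun p : (Fin n → ℝ) × (Fin n → ℝ) => mul p.1 p.2)
      (fderiv ℝ (fun p : (Fin n → ℝ) × (Fin n → ℝ) => mul p.1 p.2) (e, y)) (e, y) :=
    ((hmul_smooth.differentiable (by simp)).differentiableAt).hasFDerivAt
  have hg : HasFDerivAt (fun z : Fin n → ℝ => (z, y))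
      (ContinuousLinearMap.inl ℝ (Fin n → ℝ) (Fin n → ℝ)) e := hasFDerivAt_prodMk_left e y
  exact (hF.comp e hg).fderiv

lemma cont_fderiv_param
    (hmul_smooth : ContDiff ℝ (⊤ : ℕ∞) fun p : (Fin n → ℝ) × (Fin n → ℝ) => mul p.1 p.2)
    (e : Fin n → ℝ) :
    Continuous fun y => fderiv ℝ (fun z => mul z y) e := by
  have h1 : Continuous fun y : Fin n → ℝ =>
      fderiv ℝ (fun p : (Fin n → ℝ) × (Fin n → ℝ) => mul p.1 p.2) (e, y) :=
    (hmul_smooth.continuous_fderiv (by simp)).comp (Continuous.prodMk_right e)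
  have h2 : Continuous fun y : Fin n → ℝ =>
      (fderiv ℝ (fun p : (Fin n → ℝ) × (Fin n → ℝ) => mul p.1 p.2) (e, y)).comp
        (ContinuousLinearMap.inl ℝ (Fin n → ℝ) (Fin n → ℝ)) :=
    h1.clm_comp continuous_const
  simpa only [← fderiv_eq_comp_inl hmul_smooth] using h2

lemma dens_meas
    (hmul_smooth : ContDiff ℝ (⊤ : ℕ∞) fun p : (Fin n → ℝ) × (Fin n → ℝ) => mul p.1 p.2)
    (e : Fin n → ℝ) :
    Measurable fun y => ENNReal.ofReal |(fderiv ℝ (fun z => mul z y) e).det|⁻¹ := by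
  have h1 : Continuous fun y => |(fderiv ℝ (fun z => mul z y) e).det| :=
    (ContinuousLinearMap.continuous_det.comp (cont_fderiv_param hmul_smooth e)).abs
  exact ENNReal.measurable_ofReal.comp h1.measurable.inv

end Dens

section Invar
variable {n : ℕ} {mul : (Fin n → ℝ) → (Fin n → ℝ) → (Fin n → ℝ)}
  {inv : (Fin n → ℝ) → (Fin n → ℝ)} {e : Fin n → ℝ}

lemma lintegral_Hcheck_invariant
    (hassoc : ∀ x y z, mul (mul x y) z = mul x (mul y z))
    (hidl : ∀ x, mul e x = x) (hidr : ∀ x, mul x e = x)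
    (hinvl : ∀ x, mul (inv x) x = e) (hinvr : ∀ x, mul x (inv x) = e)
    (hmul_smooth : ContDiff ℝ (⊤ : ℕ∞) fun p : (Fin n → ℝ) × (Fin n → ℝ) => mul p.1 p.2)
    (y : Fin n → ℝ) (g : (Fin n → ℝ) → ℝ≥0∞) (hg : Measurable g) :
    ∫⁻ x, g (mul x y) ∂(Hcheck n mul e) = ∫⁻ x, g x ∂(Hcheck n mul e) := by
  set d : (Fin n → ℝ) → ℝ≥0∞ :=
    fun z => ENNReal.ofReal |(fderiv ℝ (fun w => mul w z) e).det|⁻¹ with hd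
  have hdmeas : Measurable d := dens_meas hmul_smooth e
  have hTymeas : Measurable fun x => mul x y := (hT_smooth hmul_smooth y).continuous.measurable
  have hinj : Function.Injective fun x => mul x y := by
    intro p q hpq
    have hpq' : mul p y = mul q y := hpq
    have : mul (mul p y) (inv y) = mul (mul q y) (inv y) := by rw [hpq']
    rwa [hassoc, hassoc, hinvr, hidr, hidr] at this
  have hsurj : Function.Surjective fun x => mul x y := by
    intro z
    refine ⟨mul z (inv y), ?_⟩
    show mul (mul z (inv y)) y = z
    rw [hassoc, hinvl, hidr]
  have himg : (fun x => mul x y) '' Set.univ = Set.univ := by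
    rw [Set.image_univ, hsurj.range_eq]
  have hcov := lintegral_image_eq_lintegral_abs_det_fderiv_mul volume MeasurableSet.univ
    (f := fun x => mul x y) (f' := fun x => fderiv ℝ (fun z => mul z y) x)
    (fun x _ => (hT_diff hmul_smooth y x).hasFDerivAt.hasFDerivWithinAt)
    (hinj.injOn) (fun z => d z * g z)
  rw [himg, setLIntegral_univ, setLIntegral_univ] at hcov
  show ∫⁻ x, (g ∘ fun x => mul x y) x ∂(Hcheck n mul e) = _
  unfold Hcheck
  rw [lintegral_withDensity_eq_lintegral_mul _ hdmeas (hg.comp hTymeas),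
      lintegral_withDensity_eq_lintegral_mul _ hdmeas hg]
  simp only [Pi.mul_apply, Function.comp_apply]
  rw [hcov]
  congr 1
  funext x
  have hA : (fderiv ℝ (fun z => mul z y) x).det ≠ 0 :=
    hdet_ne hassoc hidr hinvr hmul_smooth y x
  have hmul' : d (mul x y)
      = ENNReal.ofReal |(fderiv ℝ (fun z => mul z y) x).det|⁻¹
        * ENNReal.ofReal |(fderiv ℝ (fun z => mul z x) e).det|⁻¹ := by
    rw [hd]
    simp only
    rw [hdet_mul hassoc hidl hmul_smooth x y, abs_mul, mul_inv,
      ENNReal.ofReal_mul (by positivity)]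
  rw [hmul', ← mul_assoc, ← mul_assoc, ← ENNReal.ofReal_mul (abs_nonneg _),
    mul_inv_cancel₀ (by simpa using hA), ENNReal.ofReal_one, one_mul]

lemma map_Hcheck
    (hassoc : ∀ x y z, mul (mul x y) z = mul x (mul y z))
    (hidl : ∀ x, mul e x = x) (hidr : ∀ x, mul x e = x)
    (hinvl : ∀ x, mul (inv x) x = e) (hinvr : ∀ x, mul x (inv x) = e)
    (hmul_smooth : ContDiff ℝ (⊤ : ℕ∞) fun p : (Fin n → ℝ) × (Fin n → ℝ) => mul p.1 p.2)
    (y : Fin n → ℝ) :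
    Measure.map (fun x => mul x y) (Hcheck n mul e) = Hcheck n mul e := by
  have hTymeas : Measurable fun x => mul x y := (hT_smooth hmul_smooth y).continuous.measurable
  ext s hs
  rw [Measure.map_apply hTymeas hs]
  have h1 : Hcheck n mul e ((fun x => mul x y) ⁻¹' s)
      = ∫⁻ x, ((fun x => mul x y) ⁻¹' s).indicator (1 : (Fin n → ℝ) → ℝ≥0∞) x ∂(Hcheck n mul e) :=
    (lintegral_indicator_one (hTymeas hs)).symm
  have h2 : ∀ x, ((fun x => mul x y) ⁻¹' s).indicator (1 : (Fin n → ℝ) → ℝ≥0∞) x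
      = s.indicator (1 : (Fin n → ℝ) → ℝ≥0∞) (mul x y) := by
    intro x
    rfl
  rw [h1, lintegral_congr h2,
    lintegral_Hcheck_invariant hassoc hidl hidr hinvl hinvr hmul_smooth y _
    (measurable_one.indicator hs), lintegral_indicator_one hs]

lemma integral_Hcheck_invariant
    (hassoc : ∀ x y z, mul (mul x y) z = mul x (mul y z))
    (hidl : ∀ x, mul e x = x) (hidr : ∀ x, mul x e = x)
    (hinvl : ∀ x, mul (inv x) x = e) (hinvr : ∀ x, mul x (inv x) = e)
    (hmul_smooth : ContDiff ℝ (⊤ : ℕ∞) fun p : (Fin n → ℝ) × (Fin n → ℝ) => mul p.1 p.2)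
    (y : Fin n → ℝ) (f : (Fin n → ℝ) → ℝ)
    (hf : AEStronglyMeasurable f (Hcheck n mul e)) :
    ∫ x, f (mul x y) ∂(Hcheck n mul e) = ∫ x, f x ∂(Hcheck n mul e) := by
  have hTymeas : Measurable fun x => mul x y := (hT_smooth hmul_smooth y).continuous.measurable
  have hm := map_Hcheck hassoc hidl hidr hinvl hinvr hmul_smooth y
  have hf' : AEStronglyMeasurable f (Measure.map (fun x => mul x y) (Hcheck n mul e)) := by
    rwa [hm]
  rw [← integral_map hTymeas.aemeasurable hf', hm]

end Invar

lemma cont_param_integral {n : ℕ} {mul : (Fin n → ℝ) → (Fin n → ℝ) → (Fin n → ℝ)}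
    (hc : Continuous fun p : (Fin n → ℝ) × (Fin n → ℝ) => mul p.1 p.2)
    (κ : Measure (Fin n → ℝ)) [IsFiniteMeasure κ]
    {K : Set (Fin n → ℝ)} (hK : IsCompact K) (hκ : κ Kᶜ = 0)
    {f : (Fin n → ℝ) → ℝ} (hf : Continuous f) :
    Continuous fun x => ∫ y, f (mul x y) ∂κ := by
  rw [continuous_iff_continuousAt]
  intro x₀
  have hCcomp : IsCompact ((fun p : (Fin n → ℝ) × (Fin n → ℝ) => mul p.1 p.2) ''
      (Metric.closedBall x₀ 1 ×ˢ K)) := ((isCompact_closedBall x₀ 1).prod hK).image hc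
  obtain ⟨M, hM⟩ := hCcomp.exists_bound_of_continuousOn hf.continuousOn
  have hyK : ∀ᵐ y ∂κ, y ∈ K := by
    rw [ae_iff]
    exact hκ
  apply continuousAt_of_dominated (bound := fun _ => M)
  · exact Filter.Eventually.of_forall fun x =>
      (hf.comp (hc.comp (Continuous.prodMk_right x))).aestronglyMeasurable
  · filter_upwards [Metric.closedBall_mem_nhds x₀ one_pos] with x hx
    filter_upwards [hyK] with y hy
    exact hM _ ⟨(x, y), ⟨hx, hy⟩, rfl⟩
  · exact integrable_const M
  · exact Filter.Eventually.of_forall fun y =>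
      (hf.comp (hc.comp (continuous_id.prodMk continuous_const))).continuousAt


/-- If `u ∈ C²` is `L`-subharmonic and `u ∈ L¹(ℝⁿ, Ȟ)`, then `u` is `L`-harmonic. -/
theorem subharmonic_L1_harmonic
    {n : ℕ}
    -- the coefficients of L
    (a : Fin n → Fin n → (Fin n → ℝ) → ℝ) (b : Fin n → (Fin n → ℝ) → ℝ)
    (ha : ∀ i j, ContDiff ℝ (⊤ : ℕ∞) (a i j)) (hb : ∀ j, ContDiff ℝ (⊤ : ℕ∞) (b j))
    (hsym : ∀ i j x, a i j x = a j i x)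
    (hpsd : ∀ (x ξ : Fin n → ℝ), 0 ≤ ∑ i, ∑ j, a i j x * ξ i * ξ j)
    -- the Lie group structure G = (ℝⁿ, ·)
    (mul : (Fin n → ℝ) → (Fin n → ℝ) → (Fin n → ℝ))
    (inv : (Fin n → ℝ) → (Fin n → ℝ)) (e : Fin n → ℝ)
    (hassoc : ∀ x y z, mul (mul x y) z = mul x (mul y z))
    (hidl : ∀ x, mul e x = x) (hidr : ∀ x, mul x e = x)
    (hinvl : ∀ x, mul (inv x) x = e) (hinvr : ∀ x, mul x (inv x) = e)
    (hmul_smooth : ContDiff ℝ (⊤ : ℕ∞) fun p : (Fin n → ℝ) × (Fin n → ℝ) => mul p.1 p.2)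
    (hinv_smooth : ContDiff ℝ (⊤ : ℕ∞) inv)
    -- the representation hypothesis
    (Ω : Set (Fin n → ℝ)) (hΩo : IsOpen Ω) (hΩb : Bornology.IsBounded Ω)
    (μ ν : Measure (Fin n → ℝ))
    (hμ : IsProbabilityMeasure μ) (hν : IsFiniteMeasure ν)
    (hμsupp : μ (frontier Ω)ᶜ = 0) (hνsupp : ν (closure Ω)ᶜ = 0)
    (hrep : ∀ v : (Fin n → ℝ) → ℝ, ContDiff ℝ 2 v → ∀ x,
      v x = (∫ y, v (mul x y) ∂μ) - ∫ y, Lop n a b v (mul x y) ∂ν)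
    -- positivity detection for ν
    (hposdet : ∀ w : (Fin n → ℝ) → ℝ, Continuous w → (∀ x, 0 ≤ w x) →
      (∀ x, (∫ y, w (mul x y) ∂ν) = 0) → ∀ x, w x = 0)
    -- the function u
    (u : (Fin n → ℝ) → ℝ) (hu : ContDiff ℝ 2 u)
    (hsub : ∀ x, 0 ≤ Lop n a b u x)
    (hu1 : Integrable u (Hcheck n mul e)) :
    ∀ x, Lop n a b u x = 0 := by
  haveI := hμ
  haveI := hν
  haveI : SFinite (Hcheck n mul e) := by unfold Hcheck; infer_instance
  set H := Hcheck n mul e with hH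
  set w := Lop n a b u with hw
  have hwcont : Continuous w :=
    Lop_continuous (fun i j => (ha i j).continuous) (fun j => (hb j).continuous) hu
  -- compact support facts
  have hK : IsCompact (closure Ω) :=
    Metric.isCompact_of_isClosed_isBounded isClosed_closure hΩb.closure
  have hμK : μ (closure Ω)ᶜ = 0 :=
    measure_mono_null (Set.compl_subset_compl.mpr frontier_subset_closure) hμsupp
  -- the averaged function
  set Mu : (Fin n → ℝ) → ℝ := fun x => ∫ y, u (mul x y) ∂μ with hMu
  have hMucont : Continuous Mu :=
    cont_param_integral hmul_smooth.continuous μ hK hμK hu.continuous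
  set g : (Fin n → ℝ) → ℝ := fun x => ∫ y, w (mul x y) ∂ν with hg
  have hgeq : ∀ x, g x = Mu x - u x := by
    intro x
    have := hrep u hu x
    simp only [hg, hMu, hw] at *
    linarith
  have hgfun : g = fun x => Mu x - u x := funext hgeq
  have hgcont : Continuous g := by rw [hgfun]; exact hMucont.sub hu.continuous
  have hgnn : ∀ x, 0 ≤ g x := fun x => integral_nonneg fun y => hsub _
  -- the double lintegral computation
  have hucont : Continuous u := hu.continuous
  have hnnmeas : Measurable fun p : (Fin n → ℝ) × (Fin n → ℝ) =>
      (‖u (mul p.1 p.2)‖₊ : ℝ≥0∞) :=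
    measurable_coe_nnreal_ennreal.comp
      ((hucont.comp hmul_smooth.continuous).measurable.nnnorm)
  have hinner : ∀ y, ∫⁻ x, (‖u (mul x y)‖₊ : ℝ≥0∞) ∂H = ∫⁻ x, (‖u x‖₊ : ℝ≥0∞) ∂H :=
    fun y => lintegral_Hcheck_invariant hassoc hidl hidr hinvl hinvr hmul_smooth y _
      (measurable_coe_nnreal_ennreal.comp hucont.measurable.nnnorm)
  have hfin : ∫⁻ x, (‖u x‖₊ : ℝ≥0∞) ∂H < ⊤ := hu1.2
  have hswap : ∫⁻ x, ∫⁻ y, (‖u (mul x y)‖₊ : ℝ≥0∞) ∂μ ∂H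
      = ∫⁻ y, ∫⁻ x, (‖u (mul x y)‖₊ : ℝ≥0∞) ∂H ∂μ :=
    lintegral_lintegral_swap hnnmeas.aemeasurable
  have hdouble : ∫⁻ x, ∫⁻ y, (‖u (mul x y)‖₊ : ℝ≥0∞) ∂μ ∂H
      = ∫⁻ x, (‖u x‖₊ : ℝ≥0∞) ∂H := by
    rw [hswap]
    simp only [hinner]
    rw [lintegral_const, measure_univ, mul_one]
  -- Mu is integrable
  have hMuint : Integrable Mu H := by
    refine ⟨hMucont.aestronglyMeasurable, ?_⟩
    show ∫⁻ x, (‖Mu x‖₊ : ℝ≥0∞) ∂H < ⊤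
    calc ∫⁻ x, (‖Mu x‖₊ : ℝ≥0∞) ∂H
        ≤ ∫⁻ x, ∫⁻ y, (‖u (mul x y)‖₊ : ℝ≥0∞) ∂μ ∂H :=
          lintegral_mono fun x => enorm_integral_le_lintegral_enorm _
      _ = ∫⁻ x, (‖u x‖₊ : ℝ≥0∞) ∂H := hdouble
      _ < ⊤ := hfin
  -- ∫ Mu dH = ∫ u dH
  have hprodint : Integrable (Function.uncurry fun x y => u (mul x y)) (H.prod μ) := by
    refine ⟨(hucont.comp hmul_smooth.continuous).aestronglyMeasurable, ?_⟩
    show ∫⁻ p, (‖Function.uncurry (fun x y => u (mul x y)) p‖₊ : ℝ≥0∞) ∂(H.prod μ) < ⊤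
    rw [show (fun p : (Fin n → ℝ) × (Fin n → ℝ) =>
        (‖Function.uncurry (fun x y => u (mul x y)) p‖₊ : ℝ≥0∞))
      = fun p : (Fin n → ℝ) × (Fin n → ℝ) => (‖u (mul p.1 p.2)‖₊ : ℝ≥0∞) from rfl]
    rw [lintegral_prod _ hnnmeas.aemeasurable]
    rw [hdouble]
    exact hfin
  have hMu_eq : ∫ x, Mu x ∂H = ∫ x, u x ∂H := by
    have hswap2 := integral_integral_swap hprodint
    have hin2 : ∀ y, ∫ x, u (mul x y) ∂H = ∫ x, u x ∂H := fun y =>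
      integral_Hcheck_invariant hassoc hidl hidr hinvl hinvr hmul_smooth y u hu1.1
    rw [hMu] at *
    rw [hswap2]
    simp only [hin2]
    simp [measure_univ]
  -- g vanishes
  have hgint : Integrable g H := by rw [hgfun]; exact hMuint.sub hu1
  have hgzeroint : ∫ x, g x ∂H = 0 := by
    rw [hgfun, integral_sub hMuint hu1, hMu_eq, sub_self]
  have hgae : g =ᵐ[H] 0 :=
    (integral_eq_zero_iff_of_nonneg_ae (Filter.Eventually.of_forall hgnn) hgint).mp hgzeroint
  have hac : volume ≪ H := by
    rw [hH]
    unfold Hcheck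
    refine withDensity_absolutelyContinuous' (dens_meas hmul_smooth e).aemeasurable ?_
    refine Filter.Eventually.of_forall fun y => ?_
    have := hdet_ne (inv := inv) hassoc hidr hinvr hmul_smooth y e
    simp only [ne_eq, ENNReal.ofReal_eq_zero, not_le]
    positivity
  have hgae2 : g =ᵐ[volume] (fun _ => 0) := hac.ae_eq hgae
  have hgzero : g = fun _ => (0:ℝ) := (hgcont.ae_eq_iff_eq volume continuous_const).mp hgae2
  have hgz : ∀ x, (∫ y, w (mul x y) ∂ν) = 0 := fun x => congrFun hgzero x
  exact hposdet w hwcont hsub hgz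
end
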